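/- The efficient influence function ψ_Y for the conditional outcome shift term has mean zero under the joint distribution where D ~ Bernoulli(ρ) and (W,Z,Y)|D=d ~ p_d. -/
import Mathlib

open MeasureTheory ProbabilityTheory

lemma integrable_of_bdd' {α : Type*} [MeasurableSpace α] (μ : Measure α) [IsFiniteMeasure μ]
    {f : α → ℝ} (hf : AEStronglyMeasurable f μ) (C : ℝ) (h : ∀ a, |f a| ≤ C) :
    Integrable f μ :=
  ⟨hf, HasFiniteIntegral.of_bounded (ae_of_all _ h)⟩

/-- The efficient influence function `ψ_Y` for the conditional outcome shift term has mean
zero under the joint distribution where `D ~ Bernoulli(ρ)` and `(X,Y) | D = d` follows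
`p_d(X) p_d(Y|X)`, with `X = (W,Z)`.  The joint expectation is the `ρ`-mixture of the two
domain expectations. -/
theorem eif_conditional_outcome_mean_zero
    {X Y : Type*} [MeasurableSpace X] [MeasurableSpace Y]
    (pX : Fin 2 → Measure X) [∀ d, IsProbabilityMeasure (pX d)]
    (κY : Fin 2 → Kernel X Y) [∀ d, IsMarkovKernel (κY d)]
    (ρ : ℝ) (hρ : ρ ∈ Set.Ioo (0 : ℝ) 1)
    (ℓ : X → Y → ℝ) (hℓmeas : Measurable fun p : X × Y => ℓ p.1 p.2)
    (Cℓ : ℝ) (hℓbdd : ∀ x y, |ℓ x y| ≤ Cℓ)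
    (π110 : X → ℝ) (hπmeas : Measurable π110) (Cπ : ℝ) (hπbdd : ∀ x, |π110 x| ≤ Cπ)
    (hdens : pX 1 = (pX 0).withDensity (fun x => ENNReal.ofReal (π110 x)))
    (μ0 : X → ℝ) (hμ0 : ∀ x, μ0 x = ∫ y, ℓ x y ∂(κY 0 x))
    (ΛY : ℝ)
    (hΛY : ΛY = (∫ p, ℓ p.1 p.2 ∂(Measure.compProd (pX 1) (κY 1)))
              - (∫ p, ℓ p.1 p.2 ∂(Measure.compProd (pX 1) (κY 0))))
    (ψY : Fin 2 → X × Y → ℝ)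
    (hψY1 : ∀ p, ψY 1 p = (ℓ p.1 p.2 - μ0 p.1) / ρ - ΛY)
    (hψY0 : ∀ p, ψY 0 p = -((ℓ p.1 p.2 - μ0 p.1) * π110 p.1) / (1 - ρ) - ΛY) :
    ρ * (∫ p, ψY 1 p ∂(Measure.compProd (pX 1) (κY 1)))
      + (1 - ρ) * (∫ p, ψY 0 p ∂(Measure.compProd (pX 0) (κY 0))) = 0 := by
  obtain ⟨hρ0, hρ1⟩ := hρ
  have hℓsm : StronglyMeasurable fun p : X × Y => ℓ p.1 p.2 := hℓmeas.stronglyMeasurable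
  have hμ0sm : StronglyMeasurable μ0 := by
    have h := hℓsm.integral_kernel_prod_right' (κ := κY 0)
    have : μ0 = fun x => ∫ y, (fun p : X × Y => ℓ p.1 p.2) (x, y) ∂(κY 0 x) := by
      funext x; simp [hμ0 x]
    rw [this]; exact h
  have hμ0bdd : ∀ x, |μ0 x| ≤ Cℓ := by
    intro x
    rw [hμ0 x, ← Real.norm_eq_abs]
    calc ‖∫ y, ℓ x y ∂(κY 0 x)‖ ≤ Cℓ * ((κY 0 x) Set.univ).toReal :=
          norm_integral_le_of_norm_le_const (ae_of_all _ fun y => by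
            rw [Real.norm_eq_abs]; exact hℓbdd x y)
      _ = Cℓ := by simp
  -- integrability of various functions on compProd measures
  have hdsm : StronglyMeasurable fun p : X × Y => ℓ p.1 p.2 - μ0 p.1 :=
    hℓsm.sub (hμ0sm.comp_measurable measurable_fst)
  have hdbdd : ∀ p : X × Y, |ℓ p.1 p.2 - μ0 p.1| ≤ Cℓ + Cℓ := fun p =>
    (abs_sub _ _).trans (add_le_add (hℓbdd _ _) (hμ0bdd _))
  have intℓ : ∀ a b : Fin 2, Integrable (fun p : X × Y => ℓ p.1 p.2)
      ((pX a).compProd (κY b)) := fun a b =>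
    integrable_of_bdd' _ hℓsm.aestronglyMeasurable Cℓ fun p => hℓbdd _ _
  have intd : ∀ a b : Fin 2, Integrable (fun p : X × Y => ℓ p.1 p.2 - μ0 p.1)
      ((pX a).compProd (κY b)) := fun a b =>
    integrable_of_bdd' _ hdsm.aestronglyMeasurable _ hdbdd
  have intμ : ∀ a b : Fin 2, Integrable (fun p : X × Y => μ0 p.1)
      ((pX a).compProd (κY b)) := fun a b =>
    integrable_of_bdd' _ ((hμ0sm.comp_measurable measurable_fst).aestronglyMeasurable) Cℓ
      fun p => hμ0bdd _
  have intg : Integrable (fun p : X × Y => (ℓ p.1 p.2 - μ0 p.1) * π110 p.1)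
      ((pX 0).compProd (κY 0)) := by
    refine integrable_of_bdd' _
      (hdsm.mul ((hπmeas.comp measurable_fst).stronglyMeasurable)).aestronglyMeasurable
      ((Cℓ + Cℓ) * (|Cπ| + 1)) fun p => ?_
    rw [abs_mul]
    have h1 : |ℓ p.1 p.2 - μ0 p.1| ≤ Cℓ + Cℓ := hdbdd p
    have h2 : |π110 p.1| ≤ |Cπ| + 1 :=
      (hπbdd _).trans ((le_abs_self _).trans (by linarith))
    exact mul_le_mul h1 h2 (abs_nonneg _) ((abs_nonneg _).trans h1)
  -- ∫ μ0 p.1 over compProd = ∫ μ0 over pX a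
  have hμint : ∀ a b : Fin 2, (∫ p, μ0 p.1 ∂((pX a).compProd (κY b))) = ∫ x, μ0 x ∂(pX a) := by
    intro a b
    rw [Measure.integral_compProd (intμ a b)]
    simp
  -- E110 = ∫ μ0 dpX1
  have hE110 : (∫ p, ℓ p.1 p.2 ∂((pX 1).compProd (κY 0))) = ∫ x, μ0 x ∂(pX 1) := by
    rw [Measure.integral_compProd (intℓ 1 0)]
    exact integral_congr_ae (ae_of_all _ fun x => (hμ0 x).symm)
  have hI1 : (∫ p, (ℓ p.1 p.2 - μ0 p.1) ∂((pX 1).compProd (κY 1))) = ΛY := by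
    rw [integral_sub (intℓ 1 1) (intμ 1 1), hμint 1 1, hΛY, hE110]
  have hinner0 : ∀ x, (∫ y, (ℓ x y - μ0 x) * π110 x ∂(κY 0 x)) = 0 := by
    intro x
    rw [integral_mul_const]
    have : (∫ y, (ℓ x y - μ0 x) ∂(κY 0 x)) = 0 := by
      have hint : Integrable (fun y => ℓ x y) (κY 0 x) := by
        refine integrable_of_bdd' _ ?_ Cℓ fun y => hℓbdd x y
        exact (hℓmeas.comp measurable_prodMk_left).aestronglyMeasurable
      rw [integral_sub hint (integrable_const _), integral_const]
      simp [hμ0 x]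
    rw [this, zero_mul]
  have hI0 : (∫ p, (ℓ p.1 p.2 - μ0 p.1) * π110 p.1 ∂((pX 0).compProd (κY 0))) = 0 := by
    rw [Measure.integral_compProd intg]
    simp [hinner0]
  -- compute the two ψ integrals
  have hψ1int : (∫ p, ψY 1 p ∂((pX 1).compProd (κY 1))) = ΛY / ρ - ΛY := by
    have : (∫ p, ψY 1 p ∂((pX 1).compProd (κY 1)))
        = ∫ p, ((ℓ p.1 p.2 - μ0 p.1) / ρ - ΛY) ∂((pX 1).compProd (κY 1)) :=
      integral_congr_ae (ae_of_all _ fun p => hψY1 p)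
    rw [this, integral_sub (by exact (intd 1 1).div_const ρ) (integrable_const _),
      integral_div, hI1, integral_const]
    simp
  have hψ0int : (∫ p, ψY 0 p ∂((pX 0).compProd (κY 0))) = -ΛY := by
    have : (∫ p, ψY 0 p ∂((pX 0).compProd (κY 0)))
        = ∫ p, (-((ℓ p.1 p.2 - μ0 p.1) * π110 p.1) / (1 - ρ) - ΛY)
            ∂((pX 0).compProd (κY 0)) :=
      integral_congr_ae (ae_of_all _ fun p => hψY0 p)
    have hint0 : Integrable (fun p : X × Y => -((ℓ p.1 p.2 - μ0 p.1) * π110 p.1) / (1 - ρ))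
        ((pX 0).compProd (κY 0)) := by exact intg.neg.div_const (1 - ρ)
    rw [this, integral_sub hint0 (integrable_const _), integral_div, integral_neg, hI0,
      integral_const]
    simp
  rw [hψ1int, hψ0int]
  field_simp
  ring
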